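/- arXiv:1909.00358 — 2 statements merged into one kernel-verified Lean document; each statement's English description precedes it below -/
import Mathlib

section
/- Every Lie algebra is a terminal algebra, i.e., its bracket multiplication P satisfies [[[P,a],P],P] = 0 for all a. -/
def kbr1 {V : Type*} [AddCommGroup V] (A : V → V) (B : V → V → V) : V → V → V :=
  fun x y => A (B x y) - B (A x) y - B x (A y)

def kbr2 {V : Type*} [AddCommGroup V] (B C : V → V → V) : V → V → V → V :=
  fun x y z => B (C x y) z + B x (C y z) + B y (C x z)
    - C (B x y) z - C x (B y z) - C y (B x z)

def IsTerminal {V : Type*} [AddCommGroup V] (P : V → V → V) : Prop :=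
  ∀ a x y z, kbr2 (kbr1 (fun w => P a w) P) P x y z = 0

/-! Since `ad a` is a derivation of the bracket (the Jacobi identity), already `[[P,a],P]` vanishes,
and the outer bracket with the zero map is zero because `P` is biadditive. -/

theorem kbr1_eq_zero_of_leibniz {V : Type*} [AddCommGroup V] {D : V → V} {B : V → V → V}
    (hD : ∀ x y, D (B x y) = B (D x) y + B x (D y)) : kbr1 D B = 0 := by
  funext x y
  simp only [kbr1, hD, Pi.zero_apply]
  abel

theorem kbr2_zero_left {V : Type*} [AddCommGroup V] {C : V → V → V}
    (hC_left : ∀ z, C 0 z = 0) (hC_right : ∀ x, C x 0 = 0) : kbr2 0 C = 0 := by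
  funext x y z
  simp [kbr2, hC_left, hC_right]

theorem kbr1_ad_lie_eq_zero {L : Type*} [LieRing L] (a : L) :
    kbr1 (fun w => ⁅a, w⁆) (fun x y : L => ⁅x, y⁆) = 0 :=
  kbr1_eq_zero_of_leibniz fun x y => leibniz_lie a x y

theorem stmt3_general {L : Type*} [LieRing L] :
    IsTerminal (fun x y : L => ⁅x, y⁆) := by
  intro a x y z
  rw [kbr1_ad_lie_eq_zero a, kbr2_zero_left zero_lie lie_zero]
  rfl

/-- Every Lie algebra is terminal: its bracket multiplication satisfies the terminal identity. -/
theorem stmt3 {L : Type*} [LieRing L] [LieAlgebra ℂ L] :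
    IsTerminal (fun x y : L => ⁅x, y⁆) :=
  stmt3_general
end

section
/- The automorphism group of the 3-dimensional algebra T³*₀₃ over ℂ (basis e₁,e₂,e₃ with nonzero products e₁e₂ = e₃, e₂e₁ = −e₃) consists exactly of the invertible linear maps whose matrix in the basis (e₁,e₂,e₃) has the form [[x,y,0],[z,u,0],[v,w,xu−yz]] with xu − yz ≠ 0. -/
/-- T³*₀₃: basis `e₁,e₂,e₃`, nonzero products `e₁e₂ = e₃`, `e₂e₁ = −e₃`. -/
def mulT3s03 (a b : Fin 3 → ℂ) : Fin 3 → ℂ :=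
  (a 0 * b 1 - a 1 * b 0) • (Pi.single 2 1 : Fin 3 → ℂ)

lemma decomp3 (v : Fin 3 → ℂ) :
    v = v 0 • (Pi.single 0 1 : Fin 3 → ℂ) + v 1 • (Pi.single 1 1 : Fin 3 → ℂ)
      + v 2 • (Pi.single 2 1 : Fin 3 → ℂ) := by
  funext i; fin_cases i <;> simp [Pi.single_apply]

/-- The automorphisms of T³*₀₃ are exactly the invertible linear maps with matrix
`[[x,y,0],[z,u,0],[v,w,xu−yz]]` with `xu − yz ≠ 0`. -/
theorem stmt12 (φ : (Fin 3 → ℂ) ≃ₗ[ℂ] (Fin 3 → ℂ)) :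
    (∀ a b, φ (mulT3s03 a b) = mulT3s03 (φ a) (φ b)) ↔
    ∃ x y z u v w : ℂ, x * u - y * z ≠ 0 ∧
      φ (Pi.single 0 1) = x • (Pi.single 0 1 : Fin 3 → ℂ) + z • (Pi.single 1 1 : Fin 3 → ℂ)
        + v • (Pi.single 2 1 : Fin 3 → ℂ) ∧
      φ (Pi.single 1 1) = y • (Pi.single 0 1 : Fin 3 → ℂ) + u • (Pi.single 1 1 : Fin 3 → ℂ)
        + w • (Pi.single 2 1 : Fin 3 → ℂ) ∧
      φ (Pi.single 2 1) = (x * u - y * z) • (Pi.single 2 1 : Fin 3 → ℂ) := by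
  constructor
  · intro h
    set x := φ (Pi.single 0 1) 0
    set z := φ (Pi.single 0 1) 1
    set v := φ (Pi.single 0 1) 2
    set y := φ (Pi.single 1 1) 0
    set u := φ (Pi.single 1 1) 1
    set w := φ (Pi.single 1 1) 2
    have hm : mulT3s03 (Pi.single 0 1) (Pi.single 1 1) = (Pi.single 2 1 : Fin 3 → ℂ) := by
      simp [mulT3s03, Pi.single_apply]
    have h3 : φ (Pi.single 2 1) = (x * u - y * z) • (Pi.single 2 1 : Fin 3 → ℂ) := by
      have := h (Pi.single 0 1) (Pi.single 1 1)
      rw [hm] at this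
      rw [this, mulT3s03]
      simp only [x, y, z, u, mul_comm]
    have hne : x * u - y * z ≠ 0 := by
      intro h0
      have : φ (Pi.single 2 1) = 0 := by rw [h3, h0, zero_smul]
      have h2 : (Pi.single 2 1 : Fin 3 → ℂ) = 0 := by
        simpa using φ.map_eq_zero_iff.mp this
      have := congrFun h2 2
      simp at this
    exact ⟨x, y, z, u, v, w, hne, decomp3 _, decomp3 _, h3⟩
  · rintro ⟨x, y, z, u, v, w, hne, h1, h2, h3⟩ a b
    have key0 : ∀ c : Fin 3 → ℂ, φ c 0 = x * c 0 + y * c 1 := by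
      intro c
      conv_lhs => rw [decomp3 c]
      simp only [map_add, map_smul, h1, h2, h3]
      simp [Pi.single_apply]
      ring
    have key1 : ∀ c : Fin 3 → ℂ, φ c 1 = z * c 0 + u * c 1 := by
      intro c
      conv_lhs => rw [decomp3 c]
      simp only [map_add, map_smul, h1, h2, h3]
      simp [Pi.single_apply]
      ring
    have lhs : φ (mulT3s03 a b) = ((a 0 * b 1 - a 1 * b 0) * (x * u - y * z)) •
        (Pi.single 2 1 : Fin 3 → ℂ) := by
      rw [mulT3s03, map_smul, h3, smul_smul]
    rw [lhs, mulT3s03, key0, key0, key1, key1]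
    congr 1
    ring
end
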